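/- Suppose F : ℝ^d → ℝ is L-Lipschitz and let F̂_δ be its uniform smoothing. If the Goldstein δ-stationarity measure of F̂_δ at x satisfies ‖∇F̂_δ(x)‖_δ ≤ ε, then ‖∇F(x)‖_{2δ} ≤ ε. -/

import Mathlib

/-!
Let `F̂ z = E_v F (z + δ v)`. For `y ∈ B(x, δ)` where `F̂` is differentiable, the difference
quotients of `F̂` along any direction are averages of those of `F`, which are bounded by the
Lipschitz constant and converge for a.e. `v` by Rademacher's theorem. Dominated convergence then
gives `∇F̂(y) = E_v ∇F(y + δ v)`, an average of gradients of `F` at points of `B(x, 2δ)`, so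
`∂_δ F̂(x) ⊆ closure ∂_{2δ} F(x)`. As `∂_δ F̂(x)` is nonempty (`F̂` is Lipschitz) and the distance
from `0` to a set equals that to its closure, the Goldstein norms compare as claimed.
-/

open MeasureTheory Metric

/-- The Goldstein `δ`-subdifferential `∂_δ h(x) = conv(⋃_{y ∈ B(x,δ)} ∇h(y))`, taken over
points of differentiability. -/
noncomputable def goldsteinSubdiff {d : ℕ} (h : EuclideanSpace ℝ (Fin d) → ℝ) (δ : ℝ)
    (x : EuclideanSpace ℝ (Fin d)) : Set (EuclideanSpace ℝ (Fin d)) :=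
  convexHull ℝ {g | ∃ y ∈ ball x δ, DifferentiableAt ℝ h y ∧ gradient h y = g}

/-- The Goldstein stationarity measure `‖∇h(x)‖_δ = inf{‖g‖ : g ∈ ∂_δ h(x)}`. -/
noncomputable def goldsteinNorm {d : ℕ} (h : EuclideanSpace ℝ (Fin d) → ℝ) (δ : ℝ)
    (x : EuclideanSpace ℝ (Fin d)) : ℝ :=
  sInf (norm '' goldsteinSubdiff h δ x)

/-- The uniform probability measure on the closed unit Euclidean ball in `ℝ^d`. -/
noncomputable def unifBall (d : ℕ) : Measure (EuclideanSpace ℝ (Fin d)) :=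
  (volume (closedBall (0 : EuclideanSpace ℝ (Fin d)) 1))⁻¹ •
    volume.restrict (closedBall (0 : EuclideanSpace ℝ (Fin d)) 1)

open Filter Topology InnerProductSpace
open scoped NNReal

section Smoothing

variable {E α : Type*} [NormedAddCommGroup E] [MeasurableSpace α] {μ : Measure α}
  {F : E → ℝ} {K : ℝ≥0} {g : α → E}

theorem LipschitzWith.integral_comp_add [IsProbabilityMeasure μ] [NormedSpace ℝ E]
    (hF : LipschitzWith K F) (hint : ∀ z, Integrable (fun a => F (z + g a)) μ) :
    LipschitzWith K (fun z => ∫ a, F (z + g a) ∂μ) := by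
  refine LipschitzWith.of_dist_le_mul fun z w => ?_
  rw [dist_eq_norm, ← integral_sub (hint z) (hint w)]
  refine (norm_integral_le_of_norm_le_const (C := K * dist z w)
    (Eventually.of_forall fun a => ?_)).trans_eq (by simp)
  simpa [← dist_eq_norm] using hF.dist_le_mul (z + g a) (w + g a)

theorem LipschitzWith.hasLineDerivAt_integral_comp_add [IsFiniteMeasure μ] [NormedSpace ℝ E]
    (hF : LipschitzWith K F) (hint : ∀ z, Integrable (fun a => F (z + g a)) μ) {y : E}
    (hdiff : ∀ᵐ a ∂μ, DifferentiableAt ℝ F (y + g a)) (u : E) :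
    HasLineDerivAt ℝ (fun z => ∫ a, F (z + g a) ∂μ) (∫ a, fderiv ℝ F (y + g a) u ∂μ) y u := by
  rw [hasLineDerivAt_iff_tendsto_slope_zero]
  have hslope : ∀ t : ℝ, t⁻¹ • ((∫ a, F (y + t • u + g a) ∂μ) - ∫ a, F (y + g a) ∂μ) =
      ∫ a, t⁻¹ • (F (y + t • u + g a) - F (y + g a)) ∂μ := fun t => by
    rw [← integral_sub (hint _) (hint _), integral_smul]
  simp_rw [hslope]
  refine tendsto_integral_filter_of_dominated_convergence (fun _ => K * ‖u‖)
    (Eventually.of_forall fun t => ((hint _).sub (hint _)).aestronglyMeasurable.const_smul t⁻¹)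
    (Eventually.of_forall fun t => Eventually.of_forall fun a => ?_) (integrable_const _) ?_
  · rcases eq_or_ne t 0 with rfl | ht
    · simpa using by positivity
    have hdist : dist (y + t • u + g a) (y + g a) = |t| * ‖u‖ := by
      rw [add_right_comm, dist_self_add_left, norm_smul, Real.norm_eq_abs]
    calc ‖t⁻¹ • (F (y + t • u + g a) - F (y + g a))‖
        = |t|⁻¹ * dist (F (y + t • u + g a)) (F (y + g a)) := by
          rw [norm_smul, norm_inv, Real.norm_eq_abs, dist_eq_norm]
      _ ≤ |t|⁻¹ * (K * (|t| * ‖u‖)) := by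
          gcongr; exact hdist ▸ hF.dist_le_mul _ _
      _ = K * ‖u‖ := by field_simp
  · filter_upwards [hdiff] with a ha
    refine ((ha.hasFDerivAt.hasLineDerivAt u).tendsto_slope_zero).congr fun t => ?_
    rw [add_right_comm]

variable [InnerProductSpace ℝ E] [CompleteSpace E] [MeasurableSpace E] [BorelSpace E]
  [SecondCountableTopology E]

theorem LipschitzWith.integrable_gradient_comp [IsFiniteMeasure μ] (hF : LipschitzWith K F)
    (hg : AEMeasurable g μ) : Integrable (fun a => gradient F (g a)) μ := by
  have hmeas : Measurable (gradient F) :=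
    (toDual ℝ E).symm.continuous.measurable.comp (measurable_fderiv ℝ F)
  refine .of_bound (hmeas.comp_aemeasurable hg).aestronglyMeasurable K
    (Eventually.of_forall fun a => ?_)
  rw [gradient, LinearIsometryEquiv.norm_map]
  exact norm_fderiv_le_of_lipschitz ℝ hF

theorem LipschitzWith.gradient_integral_comp_add [IsFiniteMeasure μ] (hF : LipschitzWith K F)
    (hg : AEMeasurable g μ) (hint : ∀ z, Integrable (fun a => F (z + g a)) μ) {y : E}
    (hdiff : ∀ᵐ a ∂μ, DifferentiableAt ℝ F (y + g a))
    (hdiff' : DifferentiableAt ℝ (fun z => ∫ a, F (z + g a) ∂μ) y) :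
    gradient (fun z => ∫ a, F (z + g a) ∂μ) y = ∫ a, gradient F (y + g a) ∂μ := by
  refine ext_inner_right ℝ fun u => ?_
  conv_rhs =>
    rw [real_inner_comm, ← integral_inner (hF.integrable_gradient_comp (hg.const_add y))]
  rw [gradient, toDual_symm_apply, ← hdiff'.lineDeriv_eq_fderiv,
    (hF.hasLineDerivAt_integral_comp_add hint hdiff u).lineDeriv]
  simp_rw [real_inner_comm _ u, gradient, toDual_symm_apply]

theorem LipschitzWith.gradient_integral_comp_add_mem_closure_convexHull [IsProbabilityMeasure μ]
    (hF : LipschitzWith K F) (hg : AEMeasurable g μ)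
    (hint : ∀ z, Integrable (fun a => F (z + g a)) μ) {y : E}
    (hdiff : ∀ᵐ a ∂μ, DifferentiableAt ℝ F (y + g a))
    (hdiff' : DifferentiableAt ℝ (fun z => ∫ a, F (z + g a) ∂μ) y) {s : Set E}
    (hs : ∀ᵐ a ∂μ, gradient F (y + g a) ∈ s) :
    gradient (fun z => ∫ a, F (z + g a) ∂μ) y ∈ closure (convexHull ℝ s) := by
  rw [hF.gradient_integral_comp_add hg hint hdiff hdiff']
  exact (convex_convexHull ℝ s).closure.integral_mem isClosed_closure
    (hs.mono fun a ha => subset_closure (subset_convexHull ℝ s ha))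
    (hF.integrable_gradient_comp (hg.const_add y))

end Smoothing

theorem sInf_norm_image_eq_infDist_zero {E : Type*} [SeminormedAddCommGroup E] (s : Set E) :
    sInf (norm '' s) = infDist 0 s := by
  simp [infDist_eq_iInf, sInf_image', dist_zero_left]

section Goldstein

variable {d : ℕ}

theorem goldsteinNorm_eq_infDist (h : EuclideanSpace ℝ (Fin d) → ℝ) (δ : ℝ)
    (x : EuclideanSpace ℝ (Fin d)) : goldsteinNorm h δ x = infDist 0 (goldsteinSubdiff h δ x) :=
  sInf_norm_image_eq_infDist_zero _

theorem LipschitzWith.goldsteinSubdiff_nonempty {h : EuclideanSpace ℝ (Fin d) → ℝ} {K : ℝ≥0}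
    (hh : LipschitzWith K h) {δ : ℝ} (hδ : 0 < δ) (x : EuclideanSpace ℝ (Fin d)) :
    (goldsteinSubdiff h δ x).Nonempty := by
  have : (ae (volume.restrict (ball x δ))).NeBot :=
    ae_neBot.2 (Measure.restrict_eq_zero.not.2 (measure_ball_pos volume x hδ).ne')
  obtain ⟨y, hy, hdy⟩ := ((ae_restrict_mem (measurableSet_ball (x := x) (ε := δ))).and
    (ae_restrict_of_ae (hh.ae_differentiableAt (μ := volume)))).exists
  exact ⟨_, subset_convexHull ℝ _ ⟨y, hy, hdy, rfl⟩⟩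

instance : IsProbabilityMeasure (unifBall d) := by
  constructor
  rw [unifBall, Measure.smul_apply, Measure.restrict_apply_univ, smul_eq_mul]
  exact ENNReal.inv_mul_cancel (measure_closedBall_pos volume 0 one_pos).ne'
    measure_closedBall_lt_top.ne

theorem unifBall_absolutelyContinuous : unifBall d ≪ volume :=
  (Measure.absolutelyContinuous_of_le Measure.restrict_le_self).smul_left _

theorem ae_unifBall_norm_le_one : ∀ᵐ v ∂unifBall d, ‖v‖ ≤ 1 := by
  refine Measure.ae_smul_measure ?_ _
  filter_upwards [ae_restrict_mem measurableSet_closedBall] with v hv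
  simpa using hv

theorem Continuous.integrable_unifBall {G : Type*} [NormedAddCommGroup G]
    {f : EuclideanSpace ℝ (Fin d) → G} (hf : Continuous f) : Integrable f (unifBall d) :=
  (hf.continuousOn.integrableOn_compact (isCompact_closedBall 0 1)).smul_measure
    (ENNReal.inv_ne_top.2 (measure_closedBall_pos volume 0 one_pos).ne')

theorem LipschitzWith.ae_unifBall_differentiableAt_add_smul {F : EuclideanSpace ℝ (Fin d) → ℝ}
    {K : ℝ≥0} (hF : LipschitzWith K F) {δ : ℝ} (hδ : δ ≠ 0) (y : EuclideanSpace ℝ (Fin d)) :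
    ∀ᵐ v ∂unifBall d, DifferentiableAt ℝ F (y + δ • v) :=
  unifBall_absolutelyContinuous.ae_le <|
    ((measurePreserving_add_left volume y).quasiMeasurePreserving.comp
      (Measure.quasiMeasurePreserving_smul volume hδ)).ae hF.ae_differentiableAt

theorem LipschitzWith.gradient_smoothing_mem_closure_goldsteinSubdiff
    {F : EuclideanSpace ℝ (Fin d) → ℝ} {K : ℝ≥0} (hF : LipschitzWith K F) {δ : ℝ}
    {x y : EuclideanSpace ℝ (Fin d)} (hy : y ∈ ball x δ)
    (hdiff : DifferentiableAt ℝ (fun z => ∫ v, F (z + δ • v) ∂unifBall d) y) :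
    gradient (fun z => ∫ v, F (z + δ • v) ∂unifBall d) y ∈
      closure (goldsteinSubdiff F (2 * δ) x) := by
  have hδ : 0 < δ := pos_of_mem_ball hy
  have hFdiff := hF.ae_unifBall_differentiableAt_add_smul hδ.ne' y
  refine hF.gradient_integral_comp_add_mem_closure_convexHull
    (measurable_const_smul δ).aemeasurable
    (fun _ => (hF.continuous.comp (by fun_prop)).integrable_unifBall)
    hFdiff hdiff ?_
  filter_upwards [hFdiff, ae_unifBall_norm_le_one] with v hv hv1
  refine ⟨y + δ • v, ?_, hv, rfl⟩
  calc dist (y + δ • v) x ≤ dist (y + δ • v) y + dist y x := dist_triangle _ _ _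
    _ < δ + δ := by
      rw [dist_self_add_left, norm_smul, Real.norm_of_nonneg hδ.le]
      exact add_lt_add_of_le_of_lt (mul_le_of_le_one_right hδ.le hv1) hy
    _ = 2 * δ := by ring

end Goldstein

theorem goldstein_smoothing_reduction_general (d : ℕ) (L δ ε : ℝ) (hδ : 0 < δ)
    (F : EuclideanSpace ℝ (Fin d) → ℝ)
    (hlip : ∀ x y, |F x - F y| ≤ L * ‖x - y‖)
    (x : EuclideanSpace ℝ (Fin d))
    (hx : goldsteinNorm (fun x => ∫ v, F (x + δ • v) ∂(unifBall d)) δ x ≤ ε) :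
    goldsteinNorm F (2 * δ) x ≤ ε := by
  have hF : LipschitzWith L.toNNReal F :=
    .of_dist_le' fun a b => by rw [Real.dist_eq, dist_eq_norm]; exact hlip a b
  have hint (z : EuclideanSpace ℝ (Fin d)) : Integrable (fun v => F (z + δ • v)) (unifBall d) :=
    (hF.continuous.comp (by fun_prop)).integrable_unifBall
  have hsub : goldsteinSubdiff (fun x => ∫ v, F (x + δ • v) ∂(unifBall d)) δ x ⊆
      closure (goldsteinSubdiff F (2 * δ) x) :=
    convexHull_min (fun _ ⟨_, hy, hdy, hg⟩ =>
      hg ▸ hF.gradient_smoothing_mem_closure_goldsteinSubdiff hy hdy)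
      (convex_convexHull ℝ _).closure
  have hne := (hF.integral_comp_add hint).goldsteinSubdiff_nonempty hδ x
  rw [goldsteinNorm_eq_infDist] at hx ⊢
  calc infDist 0 (goldsteinSubdiff F (2 * δ) x)
      = infDist 0 (closure (goldsteinSubdiff F (2 * δ) x)) := infDist_closure.symm
    _ ≤ infDist 0 (goldsteinSubdiff (fun x => ∫ v, F (x + δ • v) ∂(unifBall d)) δ x) :=
      infDist_le_infDist_of_subset hsub hne
    _ ≤ ε := hx

/-- If `F` is `L`-Lipschitz and its uniform smoothing `F̂_δ` satisfies
`‖∇F̂_δ(x)‖_δ ≤ ε`, then `‖∇F(x)‖_{2δ} ≤ ε`. -/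
theorem goldstein_smoothing_reduction (d : ℕ) (L δ ε : ℝ) (hL : 0 ≤ L) (hδ : 0 < δ)
    (F : EuclideanSpace ℝ (Fin d) → ℝ)
    (hlip : ∀ x y, |F x - F y| ≤ L * ‖x - y‖)
    (x : EuclideanSpace ℝ (Fin d))
    (hx : goldsteinNorm (fun x => ∫ v, F (x + δ • v) ∂(unifBall d)) δ x ≤ ε) :
    goldsteinNorm F (2 * δ) x ≤ ε :=
  goldstein_smoothing_reduction_general d L δ ε hδ F hlip x hx
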